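/- Every monotone submodular HGCRP instance admits a partition (into coalitions of size at most κ) that is simultaneously Nash stable, core stable, and Pareto optimal; specifically, any partition maximizing the lexicographic potential ψ (the non-increasing sorted utility vector) among all feasible partitions has all three properties. -/

import Mathlib

open Finset

def IsPartitionMap {N : Type*} (P : N → Finset N) : Prop :=
  (∀ i, i ∈ P i) ∧ (∀ i j, j ∈ P i → P j = P i)

/-- A feasible partition: a partition map all of whose coalitions have size at most `κ`. -/
def Feasible {N : Type*} (κ : ℕ) (P : N → Finset N) : Prop :=
  IsPartitionMap P ∧ ∀ i, (P i).card ≤ κ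

/-- Nash stability with a size bound `κ`: no agent benefits by moving to an existing
coalition of size `< κ`, nor by moving to a new empty coalition. -/
def NashStable {N : Type*} [DecidableEq N] (U : Finset N → ℝ) (κ : ℕ)
    (P : N → Finset N) : Prop :=
  (∀ i, U {i} ≤ U (P i)) ∧
  ∀ i C, (∃ j, C = P j) → C ≠ P i → C.card < κ → U (insert i C) ≤ U (P i)

/-- Core stability with a size bound `κ`. -/
def CoreStable {N : Type*} (U : Finset N → ℝ) (κ : ℕ) (P : N → Finset N) : Prop :=
  ¬ ∃ C : Finset N, C.Nonempty ∧ C.card ≤ κ ∧ ∀ i ∈ C, U (P i) < U C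

/-- Pareto optimality among feasible partitions. -/
def ParetoOptimal {N : Type*} (U : Finset N → ℝ) (κ : ℕ) (P : N → Finset N) : Prop :=
  ¬ ∃ P' : N → Finset N, Feasible κ P' ∧
      (∀ i, U (P i) ≤ U (P' i)) ∧ ∃ j, U (P j) < U (P' j)

noncomputable def psi {N : Type*} [Fintype N] (U : Finset N → ℝ) (P : N → Finset N) :
    List ℝ :=
  (Finset.univ.toList.map fun i => U (P i)).insertionSort (fun a b => b ≤ a)

/-! There are finitely many feasible partitions, so a ψ-maximal one exists. Each kind of
deviation (an agent joining another coalition, a coalition `C` breaking away, a Pareto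
improvement) yields a feasible partition and a threshold `t` such that no agent with utility
above `t` loses, while some agent with utility at most `t` rises above `t`. Then for every level
`s ≥ t` at least as many agents are above `s` as before, and strictly more above `t`, so the
sorted utility vector increases lexicographically. When an agent joins a coalition, monotonicity
of `U` keeps the old members from losing. -/

theorem List.countP_eq_zero_of_pairwise_ge {α : Type*} [LinearOrder α] {y s : α} {ys : List α}
    (h : (y :: ys).Pairwise (· ≥ ·)) (hy : y ≤ s) : (y :: ys).countP (s < ·) = 0 := by
  refine List.countP_eq_zero.2 fun a ha => ?_
  have : a ≤ y := by
    rcases List.mem_cons.1 ha with rfl | ha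
    · exact le_rfl
    · exact List.rel_of_pairwise_cons h ha
  simpa using this.trans hy

theorem List.lex_lt_of_countP_le_of_lt {α : Type*} [LinearOrder α] :
    ∀ {l₁ l₂ : List α}, l₁.Pairwise (· ≥ ·) → l₂.Pairwise (· ≥ ·) → ∀ t : α,
      (∀ s, t ≤ s → l₁.countP (s < ·) ≤ l₂.countP (s < ·)) →
      l₁.countP (t < ·) < l₂.countP (t < ·) → List.Lex (· < ·) l₁ l₂
  | [], [], _, _, _, _, hlt => by simp at hlt
  | [], _ :: _, _, _, _, _, _ => List.Lex.nil
  | _ :: _, [], _, _, _, _, hlt => by simp at hlt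
  | x :: xs, y :: ys, h₁, h₂, t, hle, hlt => by
    rcases lt_trichotomy x y with hxy | rfl | hyx
    · exact List.Lex.rel hxy
    · refine List.Lex.cons (List.lex_lt_of_countP_le_of_lt h₁.of_cons h₂.of_cons t
        (fun s hs => ?_) ?_)
      · have := hle s hs; simp only [List.countP_cons] at this; omega
      · simp only [List.countP_cons] at hlt; omega
    · -- `l₂` has nothing above `max t y`, while `l₁` has `x` above it unless `max t y = t`
      exfalso
      rcases le_or_gt t y with hty | hyt
      · have h₀ := List.countP_eq_zero_of_pairwise_ge h₂ le_rfl
        have := hle y hty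
        simp only [List.countP_cons, hyx, decide_true, if_true] at this h₀
        omega
      · rw [List.countP_eq_zero_of_pairwise_ge h₂ hyt.le] at hlt
        omega

theorem Finset.countP_toList {α : Type*} (s : Finset α) (p : α → Prop) [DecidablePred p] :
    s.toList.countP (p ·) = #(s.filter p) := by
  rw [← Multiset.coe_countP, Finset.coe_toList, Multiset.countP_eq_card_filter]
  rfl

theorem IsPartitionMap.disjoint_of_notMem {N : Type*} {P : N → Finset N} (hP : IsPartitionMap P)
    {j k : N} (hk : k ∉ P j) : Disjoint (P k) (P j) :=
  disjoint_left.2 fun a hak haj => hk (by rw [← hP.2 j a haj, hP.2 k a hak]; exact hP.1 k)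

theorem feasible_singleton {N : Type*} {κ : ℕ} (hκ : 1 ≤ κ) :
    Feasible κ (fun i : N => ({i} : Finset N)) :=
  ⟨⟨mem_singleton_self, fun _ _ hj => by rw [mem_singleton.1 hj]⟩, fun _ => by simpa using hκ⟩

section Deviation

variable {N : Type*} [DecidableEq N]

def deviate (P : N → Finset N) (C : Finset N) : N → Finset N :=
  fun k => if k ∈ C then C else P k \ C

variable {P : N → Finset N} {C : Finset N} {k : N}

theorem deviate_of_mem (hk : k ∈ C) : deviate P C k = C := if_pos hk

theorem deviate_of_notMem (hk : k ∉ C) : deviate P C k = P k \ C := if_neg hk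

theorem Feasible.deviate {κ : ℕ} (hP : Feasible κ P) (hC : #C ≤ κ) :
    Feasible κ (deviate P C) := by
  refine ⟨⟨fun k => ?_, fun k j hj => ?_⟩, fun k => ?_⟩
  · by_cases hk : k ∈ C
    · rwa [deviate_of_mem hk]
    · rw [deviate_of_notMem hk]; exact mem_sdiff.2 ⟨hP.1.1 k, hk⟩
  · by_cases hk : k ∈ C
    · rw [deviate_of_mem hk] at hj ⊢; exact deviate_of_mem hj
    · rw [deviate_of_notMem hk] at hj ⊢
      obtain ⟨hjk, hjC⟩ := mem_sdiff.1 hj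
      rw [deviate_of_notMem hjC, hP.1.2 k j hjk]
  · by_cases hk : k ∈ C
    · rwa [deviate_of_mem hk]
    · rw [deviate_of_notMem hk]; exact (card_le_card sdiff_subset).trans (hP.2 k)

end Deviation

section Potential

variable {N : Type*} [Fintype N] (U : Finset N → ℝ)

theorem psi_pairwise (P : N → Finset N) : (psi U P).Pairwise (· ≥ ·) :=
  List.pairwise_insertionSort _ _

theorem countP_psi (P : N → Finset N) (s : ℝ) :
    (psi U P).countP (s < ·) = #{i | s < U (P i)} := by
  rw [psi, (List.perm_insertionSort _ _).countP_eq, List.countP_map]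
  exact Finset.countP_toList _ (fun i => s < U (P i))

theorem psi_lex_of_threshold {P P' : N → Finset N} (t : ℝ)
    (hle : ∀ i, t < U (P i) → U (P i) ≤ U (P' i)) {j : N} (hj : U (P j) ≤ t)
    (hj' : t < U (P' j)) : List.Lex (· < ·) (psi U P) (psi U P') := by
  refine List.lex_lt_of_countP_le_of_lt (psi_pairwise U P) (psi_pairwise U P') t
    (fun s hs => ?_) ?_ <;> rw [countP_psi, countP_psi]
  · exact card_le_card fun i hi => by
      simp only [mem_filter_univ] at hi ⊢
      exact hi.trans_le (hle i (hs.trans_lt hi))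
  · refine card_lt_card ⟨fun i hi => ?_, fun hsub => ?_⟩
    · simp only [mem_filter_univ] at hi ⊢
      exact hi.trans_le (hle i hi)
    · exact hj.not_gt ((mem_filter_univ j).1 (hsub ((mem_filter_univ j).2 hj')))

end Potential

section PsiMaximal

variable {N : Type*} [Fintype N] {U : Finset N → ℝ} {κ : ℕ} {P : N → Finset N}

def IsPsiMaximal (U : Finset N → ℝ) (κ : ℕ) (P : N → Finset N) : Prop :=
  Feasible κ P ∧ ∀ P' : N → Finset N, Feasible κ P' → ¬ List.Lex (· < ·) (psi U P) (psi U P')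

theorem exists_isPsiMaximal [DecidableEq N] (U : Finset N → ℝ) (hκ : 1 ≤ κ) :
    ∃ P, IsPsiMaximal U κ P := by
  classical
  obtain ⟨P, hP, hmax⟩ := (univ.filter (Feasible κ)).exists_max_image (psi U)
    ⟨_, (mem_filter_univ _).2 (feasible_singleton hκ)⟩
  exact ⟨P, (mem_filter_univ _).1 hP, fun P' hP' hlt =>
    (hmax P' ((mem_filter_univ _).2 hP')).not_gt hlt⟩

theorem IsPsiMaximal.le_of_le_threshold (h : IsPsiMaximal U κ P) {P' : N → Finset N}
    (hP' : Feasible κ P') {t : ℝ} (hle : ∀ i, t < U (P i) → U (P i) ≤ U (P' i)) {j : N}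
    (hj : U (P j) ≤ t) : U (P' j) ≤ t :=
  not_lt.1 fun hj' => h.2 P' hP' (psi_lex_of_threshold U t hle hj hj')

theorem IsPsiMaximal.paretoOptimal (h : IsPsiMaximal U κ P) : ParetoOptimal U κ P := by
  rintro ⟨P', hP', hle, j, hj⟩
  exact (h.le_of_le_threshold hP' (fun i _ => hle i) le_rfl).not_gt hj

variable [DecidableEq N]

theorem IsPsiMaximal.le_of_deviate (h : IsPsiMaximal U κ P) {C : Finset N} (hC : #C ≤ κ)
    {t : ℝ} (hin : ∀ k ∈ C, t < U (P k) → U (P k) ≤ U C)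
    (hout : ∀ k ∉ C, t < U (P k) → Disjoint (P k) C) {j : N} (hj : j ∈ C)
    (hjt : U (P j) ≤ t) : U C ≤ t := by
  refine deviate_of_mem (P := P) hj ▸ h.le_of_le_threshold (h.1.deviate hC) (fun k hk => ?_) hjt
  by_cases hkC : k ∈ C
  · rw [deviate_of_mem hkC]; exact hin k hkC hk
  · rw [deviate_of_notMem hkC, sdiff_eq_self_of_disjoint (hout k hkC hk)]

theorem IsPsiMaximal.coreStable (h : IsPsiMaximal U κ P) : CoreStable U κ P := by
  rintro ⟨C, hne, hC, hblock⟩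
  set t := C.sup' hne fun i => U (P i)
  have hle : ∀ a ∈ C, U (P a) ≤ t := fun a ha => le_sup' (fun i => U (P i)) ha
  obtain ⟨j, hj, hjt⟩ := exists_mem_eq_sup' hne fun i => U (P i)
  refine (hblock j hj).not_ge (hjt ▸ h.le_of_deviate hC (t := t)
    (fun k hk htk => absurd (hle k hk) htk.not_ge) (fun k _ htk => ?_) hj (hle j hj))
  exact disjoint_left.2 fun a hak haC => htk.not_ge (h.1.1.2 k a hak ▸ hle a haC)

theorem IsPsiMaximal.nashStable (h : IsPsiMaximal U κ P) (hκ : 1 ≤ κ) (hmono : Monotone U) :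
    NashStable U κ P := by
  have hP := h.1.1
  refine ⟨fun i => not_lt.1 fun hi => h.coreStable ⟨{i}, singleton_nonempty i,
    by simpa using hκ, by simpa using hi⟩, ?_⟩
  rintro i _ ⟨j, rfl⟩ _ hcard
  refine h.le_of_deviate ((card_insert_le i (P j)).trans hcard) (t := U (P i))
    (fun k hk htk => ?_) (fun k hk htk => ?_) (mem_insert_self i (P j)) le_rfl
  · have hki : k ≠ i := by rintro rfl; exact htk.false
    rw [hP.2 j k ((mem_insert.1 hk).resolve_left hki)]
    exact hmono (subset_insert i (P j))
  · rw [disjoint_insert_right]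
    refine ⟨fun hik => htk.ne (by rw [hP.2 k i hik]), hP.disjoint_of_notMem ?_⟩
    exact fun hkj => hk (mem_insert_of_mem hkj)

end PsiMaximal

theorem exists_NS_CS_PO_general {N : Type*} [DecidableEq N] [Fintype N]
    (U : Finset N → ℝ) (κ : ℕ) (hκ : 1 ≤ κ)
    (hmono : ∀ X Y : Finset N, X ⊆ Y → U X ≤ U Y) :
    (∀ P : N → Finset N, Feasible κ P →
        (∀ P' : N → Finset N, Feasible κ P' → ¬ List.Lex (· < ·) (psi U P) (psi U P')) →
        NashStable U κ P ∧ CoreStable U κ P ∧ ParetoOptimal U κ P) ∧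
    ∃ P : N → Finset N, Feasible κ P ∧
      NashStable U κ P ∧ CoreStable U κ P ∧ ParetoOptimal U κ P := by
  have stable : ∀ P, IsPsiMaximal U κ P →
      NashStable U κ P ∧ CoreStable U κ P ∧ ParetoOptimal U κ P :=
    fun P h => ⟨h.nashStable hκ hmono, h.coreStable, h.paretoOptimal⟩
  obtain ⟨P, hP⟩ := exists_isPsiMaximal U hκ
  exact ⟨fun P hP hmax => stable P ⟨hP, hmax⟩, P, hP.1, stable P hP⟩

/-- every monotone submodular HGCRP instance admits a feasible partition
that is simultaneously Nash stable, core stable and Pareto optimal; specifically, any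
feasible partition maximizing the lexicographic potential `ψ` has all three properties. -/
theorem exists_NS_CS_PO {N : Type*} [DecidableEq N] [Fintype N]
    (U : Finset N → ℝ) (κ : ℕ) (hκ : 1 ≤ κ)
    (hmono : ∀ X Y : Finset N, X ⊆ Y → U X ≤ U Y)
    (hsub : ∀ (X Y : Finset N) (x : N), X ⊆ Y → x ∉ Y →
      U (insert x Y) - U Y ≤ U (insert x X) - U X)
    (hempty : U ∅ = 0) :
    (∀ P : N → Finset N, Feasible κ P →
        (∀ P' : N → Finset N, Feasible κ P' → ¬ List.Lex (· < ·) (psi U P) (psi U P')) →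
        NashStable U κ P ∧ CoreStable U κ P ∧ ParetoOptimal U κ P) ∧
    ∃ P : N → Finset N, Feasible κ P ∧
      NashStable U κ P ∧ CoreStable U κ P ∧ ParetoOptimal U κ P :=
  exists_NS_CS_PO_general U κ hκ hmono
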